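/- Under the stepsize rule of Algorithm adaptive gradient descent-2 (α_k = min{√(2/3 + θ_{k-1}) α_{k-1}, α_{k-1}/√(max(2α_{k-1}²L_k² - 1, 0))}, θ_k = α_k/α_{k-1}), the iterates satisfy the Lyapunov inequality ‖x^{k+1}-x*‖² + ‖x^{k+1}-x^k‖² + α_k(2+3θ_k)(f(x^k)-f*) ≤ ‖x^k-x*‖² + ‖x^k-x^{k-1}‖² + 3α_kθ_k(f(x^{k-1})-f*). -/

import Mathlib

open scoped RealInnerProductSpace

/-- Stepsize rule of adaptive gradient descent-2:
`α_k = min{√(2/3+θ_{k-1})·α_{k-1}, α_{k-1}/√([2α_{k-1}²L_k²-1]_+)}`,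
with the convention `a/0 = +∞` (when the bracket is nonpositive
the second bound is inactive). -/
noncomputable def adgd2Step (αp θp Lk : ℝ) : ℝ :=
  if 2 * αp ^ 2 * Lk ^ 2 - 1 ≤ 0 then Real.sqrt (2 / 3 + θp) * αp
  else min (Real.sqrt (2 / 3 + θp) * αp) (αp / Real.sqrt (2 * αp ^ 2 * Lk ^ 2 - 1))

/-! Expanding `x^{k+1} = x^k - α_k ∇f(x^k)` reduces the claim to
`2α_k²‖∇f(x^k)‖² + 3(α_k²/α_{k-1})(f(x^k) - f(x^{k-1})) ≤ α_{k-1}²‖∇f(x^{k-1})‖²` plus the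
gradient inequality at `x^k` towards `x*`. Writing `‖∇f(x^k)‖²` through `‖∇f(x^k) - ∇f(x^{k-1})‖²`,
the local curvature `L_k` and the stepsize rule bound that difference, and the remaining inner
product and function gap are controlled by the gradient inequality between `x^{k-1}` and `x^k`
in both directions. -/

open Set

theorem ConvexOn.add_inner_sub_le_of_hasGradientAt {E : Type*} [NormedAddCommGroup E]
    [InnerProductSpace ℝ E] [CompleteSpace E] {f : E → ℝ} {g x : E} (hf : ConvexOn ℝ univ f)
    (hg : HasGradientAt f g x) (y : E) : f x + ⟪g, y - x⟫ ≤ f y := by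
  set c : ℝ →ᵃ[ℝ] E := AffineMap.lineMap x y
  have hc0 : c 0 = x := AffineMap.lineMap_apply_zero x y
  have hφ : HasDerivAt (f ∘ c) ⟪g, y - x⟫ 0 := by
    simpa using (hc0 ▸ hg.hasFDerivAt).comp_hasDerivAt (0 : ℝ) AffineMap.hasDerivAt_lineMap
  have := (hf.comp_affineMap c).le_slope_of_hasDerivAt (mem_univ 0) (mem_univ 1) one_pos hφ
  simp only [slope_def_field, Function.comp_apply, c, AffineMap.lineMap_apply_one,
    AffineMap.lineMap_apply_zero, sub_zero, div_one] at this
  linarith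

theorem norm_sub_le_div_norm_sub_mul {E F : Type*} [NormedAddCommGroup E]
    [NormedAddCommGroup F] (g : E → F) (x y : E) :
    ‖g x - g y‖ ≤ ‖g x - g y‖ / ‖x - y‖ * ‖x - y‖ := by
  rcases eq_or_ne x y with rfl | hxy
  · simp
  · rw [div_mul_cancel₀ _ (norm_ne_zero_iff.2 (sub_ne_zero.2 hxy))]

section Stepsize

variable {αp θp L : ℝ}

theorem adgd2Step_nonneg (hαp : 0 ≤ αp) : 0 ≤ adgd2Step αp θp L := by
  have := mul_nonneg (Real.sqrt_nonneg (2 / 3 + θp)) hαp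
  unfold adgd2Step
  split_ifs
  · exact this
  · exact le_min this (div_nonneg hαp (Real.sqrt_nonneg _))

theorem two_mul_adgd2Step_sq_mul_le (hαp : 0 ≤ αp) :
    2 * adgd2Step αp θp L ^ 2 * L ^ 2 * αp ^ 2 ≤ αp ^ 2 + adgd2Step αp θp L ^ 2 := by
  set α := adgd2Step αp θp L with hα
  rcases le_or_gt (2 * αp ^ 2 * L ^ 2 - 1) 0 with hs | hs
  · linear_combination mul_nonpos_of_nonneg_of_nonpos (sq_nonneg α) hs + sq_nonneg αp
  · have hα_le : α ≤ αp / √(2 * αp ^ 2 * L ^ 2 - 1) := by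
      rw [hα, adgd2Step, if_neg hs.not_ge]
      exact min_le_right _ _
    have hmul : α * √(2 * αp ^ 2 * L ^ 2 - 1) ≤ αp :=
      (le_div_iff₀ (Real.sqrt_pos.2 hs)).1 hα_le
    have hsq := pow_le_pow_left₀ (mul_nonneg (adgd2Step_nonneg hαp) (Real.sqrt_nonneg _)) hmul 2
    rw [mul_pow, Real.sq_sqrt hs.le] at hsq
    linear_combination hsq

end Stepsize

section GradientStep

variable {E : Type*} [NormedAddCommGroup E] [InnerProductSpace ℝ E]

theorem two_mul_sq_mul_norm_sq_le_of_norm_sub_le {u v : E} {a b L : ℝ}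
    (huv : ‖u - v‖ ≤ L * (a * ‖v‖)) (hab : 2 * b ^ 2 * L ^ 2 * a ^ 2 ≤ a ^ 2 + b ^ 2) :
    2 * b ^ 2 * ‖u‖ ^ 2 ≤ (a ^ 2 - b ^ 2) * ‖v‖ ^ 2 + 4 * b ^ 2 * ⟪u, v⟫ := by
  have hsq : ‖u - v‖ ^ 2 ≤ L ^ 2 * a ^ 2 * ‖v‖ ^ 2 := by
    simpa only [mul_pow, mul_assoc] using pow_le_pow_left₀ (norm_nonneg _) huv 2
  have hexp : ‖u - v‖ ^ 2 = ‖u‖ ^ 2 - 2 * ⟪u, v⟫ + ‖v‖ ^ 2 := norm_sub_sq_real u v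
  linear_combination 2 * mul_le_mul_of_nonneg_left hsq (sq_nonneg b) +
    mul_le_mul_of_nonneg_right hab (sq_nonneg ‖v‖) - 2 * b ^ 2 * hexp

variable [CompleteSpace E] {f : E → ℝ} {f' : E → E}

theorem adgd2_gradient_norm_bound (hf : ConvexOn ℝ univ f)
    (hf' : ∀ z, HasGradientAt f (f' z) z) {αp αk L : ℝ} (hαp : 0 < αp) {xp xk : E}
    (hxk : xk = xp - αp • f' xp) (hL : ‖f' xk - f' xp‖ ≤ L * ‖xk - xp‖)
    (hstep : 2 * αk ^ 2 * L ^ 2 * αp ^ 2 ≤ αp ^ 2 + αk ^ 2) :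
    2 * αk ^ 2 * ‖f' xk‖ ^ 2 + 3 * (αk ^ 2 / αp) * (f xk - f xp) ≤ αp ^ 2 * ‖f' xp‖ ^ 2 := by
  have hxkp : xk - xp = -(αp • f' xp) := by rw [hxk]; abel
  have hxpk : xp - xk = αp • f' xp := by rw [hxk]; abel
  have hnorm : ‖xk - xp‖ = αp * ‖f' xp‖ := by
    rw [hxkp, norm_neg, norm_smul, Real.norm_of_nonneg hαp.le]
  have hinner : αp * ⟪f' xk, f' xp⟫ ≤ f xp - f xk := by
    have := hf.add_inner_sub_le_of_hasGradientAt (hf' xk) xp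
    rw [hxpk, inner_smul_right] at this
    linarith
  have hdecr : f xp - f xk ≤ αp * ‖f' xp‖ ^ 2 := by
    have := hf.add_inner_sub_le_of_hasGradientAt (hf' xp) xk
    rw [hxkp, inner_neg_right, inner_smul_right, real_inner_self_eq_norm_sq] at this
    linarith
  have hsplit := two_mul_sq_mul_norm_sq_le_of_norm_sub_le (hnorm ▸ hL) hstep
  have hc : 0 ≤ αk ^ 2 / αp := by positivity
  have hcancel : αk ^ 2 / αp * αp = αk ^ 2 := div_mul_cancel₀ _ hαp.ne'
  have h1 := mul_le_mul_of_nonneg_left hinner hc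
  have h2 := mul_le_mul_of_nonneg_left hdecr hc
  rw [← mul_assoc, hcancel] at h1 h2
  linear_combination hsplit + 4 * h1 + h2

theorem adgd2_lyapunov_of_stepsize_bound (hf : ConvexOn ℝ univ f)
    (hf' : ∀ z, HasGradientAt f (f' z) z) {αp αk L : ℝ} (hαp : 0 < αp) (hαk : 0 ≤ αk)
    {xp xk x1 xstar : E} (hxk : xk = xp - αp • f' xp) (hx1 : x1 = xk - αk • f' xk)
    (hL : ‖f' xk - f' xp‖ ≤ L * ‖xk - xp‖)
    (hstep : 2 * αk ^ 2 * L ^ 2 * αp ^ 2 ≤ αp ^ 2 + αk ^ 2) :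
    ‖x1 - xstar‖ ^ 2 + ‖x1 - xk‖ ^ 2 + αk * (2 + 3 * (αk / αp)) * (f xk - f xstar) ≤
      ‖xk - xstar‖ ^ 2 + ‖xk - xp‖ ^ 2 + 3 * αk * (αk / αp) * (f xp - f xstar) := by
  have hbound := adgd2_gradient_norm_bound hf hf' hαp hxk hL hstep
  have hopt : f xk - f xstar ≤ ⟪f' xk, xk - xstar⟫ := by
    have := hf.add_inner_sub_le_of_hasGradientAt (hf' xk) xstar
    rw [← neg_sub, inner_neg_right] at this
    linarith
  have hnorm_p : ‖xk - xp‖ ^ 2 = αp ^ 2 * ‖f' xp‖ ^ 2 := by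
    rw [hxk, sub_sub_cancel_left, norm_neg, norm_smul, Real.norm_of_nonneg hαp.le, mul_pow]
  have hnorm_k : ‖x1 - xk‖ ^ 2 = αk ^ 2 * ‖f' xk‖ ^ 2 := by
    rw [hx1, sub_sub_cancel_left, norm_neg, norm_smul, Real.norm_of_nonneg hαk, mul_pow]
  have hexp : ‖x1 - xstar‖ ^ 2 =
      ‖xk - xstar‖ ^ 2 - 2 * αk * ⟪f' xk, xk - xstar⟫ + αk ^ 2 * ‖f' xk‖ ^ 2 := by
    rw [hx1, sub_right_comm, norm_sub_sq_real, inner_smul_right, real_inner_comm, norm_smul,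
      Real.norm_of_nonneg hαk, mul_pow]
    ring
  rw [hexp, hnorm_k, hnorm_p]
  linear_combination hbound + mul_le_mul_of_nonneg_left hopt (by positivity : (0 : ℝ) ≤ 2 * αk)

end GradientStep

theorem adgd2_lyapunov_step_general {d : ℕ}
    (f : EuclideanSpace ℝ (Fin d) → ℝ) (f' : EuclideanSpace ℝ (Fin d) → EuclideanSpace ℝ (Fin d))
    (hconv : ConvexOn ℝ Set.univ f)
    (hgrad : ∀ z, HasGradientAt f (f' z) z)
    (αp θp : ℝ) (hαp : 0 < αp)
    (xp xk x1 xstar : EuclideanSpace ℝ (Fin d))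
    (hxk : xk = xp - αp • f' xp) :
    let Lk := ‖f' xk - f' xp‖ / ‖xk - xp‖
    let αk := adgd2Step αp θp Lk
    let θk := αk / αp
    x1 = xk - αk • f' xk →
    ‖x1 - xstar‖ ^ 2 + ‖x1 - xk‖ ^ 2 + αk * (2 + 3 * θk) * (f xk - f xstar) ≤
      ‖xk - xstar‖ ^ 2 + ‖xk - xp‖ ^ 2 + 3 * αk * θk * (f xp - f xstar) := by
  intro Lk αk θk hx1
  exact adgd2_lyapunov_of_stepsize_bound hconv hgrad hαp (adgd2Step_nonneg hαp.le) hxk hx1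
    (norm_sub_le_div_norm_sub_mul f' xk xp) (two_mul_adgd2Step_sq_mul_le hαp.le)

theorem adgd2_lyapunov_step {d : ℕ}
    (f : EuclideanSpace ℝ (Fin d) → ℝ) (f' : EuclideanSpace ℝ (Fin d) → EuclideanSpace ℝ (Fin d))
    (hconv : ConvexOn ℝ Set.univ f)
    (hgrad : ∀ z, HasGradientAt f (f' z) z)
    (αp θp : ℝ) (hαp : 0 < αp) (hθp : 0 ≤ θp)
    (xp xk x1 xstar : EuclideanSpace ℝ (Fin d))
    (hmin : ∀ y, f xstar ≤ f y)
    (hxk : xk = xp - αp • f' xp) :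
    let Lk := ‖f' xk - f' xp‖ / ‖xk - xp‖
    let αk := adgd2Step αp θp Lk
    let θk := αk / αp
    x1 = xk - αk • f' xk →
    ‖x1 - xstar‖ ^ 2 + ‖x1 - xk‖ ^ 2 + αk * (2 + 3 * θk) * (f xk - f xstar) ≤
      ‖xk - xstar‖ ^ 2 + ‖xk - xp‖ ^ 2 + 3 * αk * θk * (f xp - f xstar) :=
  adgd2_lyapunov_step_general f f' hconv hgrad αp θp hαp xp xk x1 xstar hxk
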